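/- Let ρ_B be defined on the ZF algebra generators by ρ_B(a(k)) = b(k) a(−k) and ρ_B(a†(k)) = a†(−k) b(−k), where b = T B T'⁻¹ satisfies the reflection equation, unitarity b(k)b(−k) = I, and the mixed exchange relations a₁ b₂ = R₂₁ b₂ R'₁₂ a₁ and b₁ a₂† = a₂† R₁₂ b₁ R'₂₁. Then α := ρ_B(a) satisfies the same ZF exchange relation as a: α₁(k₁) α₂(k₂) = R₂₁(k₂,k₁) α₂(k₂) α₁(k₁). -/

import Mathlib

/-!
Two-index quantities `x i * y j` are treated as vectors on `Fin N × Fin N`; the ZF relation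
then says `x₁ y₂ = R₂₁ · P (y₂ x₁)` with `P` the flip. Moving `a(−k₁)` past `b(k₂)` with the
mixed relation gives `α₁ α₂ = b₁ R'₂₁ b₂ R̄₁₂ · a'₁ a'₂`, and the ZF relation of `a` at `−k`
together with unitarity absorbs `R̄₁₂`, leaving `b₁ R'₂₁ b₂ · P (a'₂ a'₁)`. The same
computation with `k₁, k₂` exchanged, flipped, gives the right-hand side of the reflection
equation applied to `P (a'₂ a'₁)`; the reflection equation and unitarity of `R` finish.
-/

open Matrix

/-- Operators on the tensor product of two auxiliary spaces. -/
abbrev TwoLeg (N : ℕ) (α : Type*) := Matrix (Fin N × Fin N) (Fin N × Fin N) α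

/-- Conjugation by the flip operator: `flipM M = P ∘ M ∘ P`. -/
def flipM {N : ℕ} {α : Type*} (M : TwoLeg N α) : TwoLeg N α :=
  Matrix.of fun p q => M (p.2, p.1) (q.2, q.1)

/-- Embedding of an `N×N` matrix into auxiliary space 1. -/
def leg1 {N : ℕ} {α : Type*} [MulZeroOneClass α] (M : Matrix (Fin N) (Fin N) α) :
    TwoLeg N α :=
  Matrix.of fun p q => if p.2 = q.2 then M p.1 q.1 else 0

/-- Embedding of an `N×N` matrix into auxiliary space 2. -/
def leg2 {N : ℕ} {α : Type*} [MulZeroOneClass α] (M : Matrix (Fin N) (Fin N) α) :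
    TwoLeg N α :=
  Matrix.of fun p q => if p.1 = q.1 then M p.2 q.2 else 0

/-- Map a complex matrix to a matrix over the algebra `A`. -/
def cmap {N : ℕ} (A : Type*) [Ring A] [Algebra ℂ A] (M : TwoLeg N ℂ) : TwoLeg N A :=
  M.map (algebraMap ℂ A)

/-- The matrix of reflection generators `b(k) = (bᵢⱼ(k))`. -/
def bmat {N : ℕ} {A : Type*} (b : Fin N → Fin N → ℝ → A) (k : ℝ) :
    Matrix (Fin N) (Fin N) A :=
  Matrix.of fun i j => b i j k

/-- `α(k) := ρ_B(a(k)) = b(k) a(−k)`. -/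
def alphaGen {N : ℕ} {A : Type*} [Ring A]
    (a : Fin N → ℝ → A) (b : Fin N → Fin N → ℝ → A) (i : Fin N) (k : ℝ) : A :=
  ∑ j : Fin N, b i j k * a j (-k)

section TwoLegVectors

variable {N : ℕ}

def flipV {α : Type*} (v : Fin N × Fin N → α) : Fin N × Fin N → α :=
  fun p => v (p.2, p.1)

def prodVec {A : Type*} [Mul A] (u v : Fin N → A) : Fin N × Fin N → A :=
  fun z => u z.1 * v z.2

@[simp] theorem flipM_flipM {α : Type*} (M : TwoLeg N α) : flipM (flipM M) = M := rfl

@[simp] theorem flipM_leg1 {α : Type*} [MulZeroOneClass α] (M : Matrix (Fin N) (Fin N) α) :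
    flipM (leg1 M) = leg2 M := rfl

@[simp] theorem flipM_leg2 {α : Type*} [MulZeroOneClass α] (M : Matrix (Fin N) (Fin N) α) :
    flipM (leg2 M) = leg1 M := rfl

theorem flipM_mul {α : Type*} [NonUnitalNonAssocSemiring α] (M M' : TwoLeg N α) :
    flipM (M * M') = flipM M * flipM M' := by
  ext p q
  exact Fintype.sum_equiv (Equiv.prodComm _ _) _ _ fun _ => rfl

theorem flipV_mulVec {α : Type*} [NonUnitalNonAssocSemiring α] (M : TwoLeg N α)
    (v : Fin N × Fin N → α) : flipV (M *ᵥ v) = flipM M *ᵥ flipV v := by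
  funext p
  exact Fintype.sum_equiv (Equiv.prodComm _ _) _ _ fun _ => rfl

variable {A : Type*} [Ring A]

theorem prodVec_mulVec_left (M : Matrix (Fin N) (Fin N) A) (u v : Fin N → A) :
    prodVec (M *ᵥ u) v = leg1 M *ᵥ prodVec u v := by
  funext p
  simp [prodVec, mulVec, dotProduct, leg1, Fintype.sum_prod_type, ite_mul, Finset.sum_mul,
    mul_assoc]

theorem leg2_mulVec_apply (M : Matrix (Fin N) (Fin N) A) (v : Fin N × Fin N → A)
    (p : Fin N × Fin N) : (leg2 M *ᵥ v) p = ∑ r, M p.2 r * v (p.1, r) := by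
  simp [mulVec, dotProduct, leg2, Fintype.sum_prod_type, ite_mul]

variable [Algebra ℂ A]

theorem cmap_mulVec_apply (M : TwoLeg N ℂ) (v : Fin N × Fin N → A) (p : Fin N × Fin N) :
    (cmap A M *ᵥ v) p = ∑ q, M p q • v q := by
  simp [mulVec, dotProduct, cmap, Algebra.smul_def]

@[simp] theorem flipM_cmap (M : TwoLeg N ℂ) : flipM (cmap A M) = cmap A (flipM M) := rfl

theorem cmap_mul_cmap_eq_one {R S : TwoLeg N ℂ} (h : R * S = 1) :
    cmap A R * cmap A S = 1 := by
  rw [cmap, cmap, ← Matrix.map_mul, h, Matrix.map_one _ (map_zero _) (map_one _)]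

theorem exchange_iff_prodVec (R : TwoLeg N ℂ) (u v : Fin N → A) :
    (∀ i j, u i * v j = ∑ i', ∑ j', R (j, i) (j', i') • (v j' * u i')) ↔
      prodVec u v = cmap A (flipM R) *ᵥ flipV (prodVec v u) := by
  simp only [funext_iff, Prod.forall, cmap_mulVec_apply, Fintype.sum_prod_type]
  rfl

theorem prodVec_mulVec_right_of_exchange (R₂₁ R'₁₂ : TwoLeg N ℂ) (u v : Fin N → A)
    (B : Matrix (Fin N) (Fin N) A)
    (h : ∀ i m n, u i * B m n = ∑ i₁, ∑ m₁, ∑ m₂, ∑ i₂,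
      (R₂₁ (m, i) (m₁, i₁) * R'₁₂ (i₁, m₂) (i₂, n)) • (B m₁ m₂ * u i₂)) :
    prodVec u (B *ᵥ v) = (cmap A (flipM R₂₁) * leg2 B * cmap A R'₁₂) *ᵥ prodVec u v := by
  funext p
  obtain ⟨i, j⟩ := p
  have hmove : prodVec u (B *ᵥ v) (i, j) = ∑ n, (u i * B j n) * v n := by
    simp only [prodVec, mulVec, dotProduct, Finset.mul_sum, mul_assoc]
  rw [hmove, ← mulVec_mulVec, ← mulVec_mulVec, cmap_mulVec_apply]
  simp only [h, flipM, of_apply, leg2_mulVec_apply, cmap_mulVec_apply, Fintype.sum_prod_type,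
    prodVec, Finset.sum_mul, Finset.mul_sum, Finset.smul_sum, smul_mul_assoc, mul_smul_comm,
    smul_smul, mul_assoc]
  iterate 3 (rw [Finset.sum_comm]; refine Finset.sum_congr rfl fun _ _ => ?_)
  exact Finset.sum_comm

end TwoLegVectors

section ReflectionAlgebra

variable {N : ℕ} {A : Type*} [Ring A]

theorem alphaGen_eq_mulVec (a : Fin N → ℝ → A) (b : Fin N → Fin N → ℝ → A) (k : ℝ) :
    (alphaGen a b · k) = bmat b k *ᵥ (a · (-k)) :=
  rfl

variable [Algebra ℂ A]

theorem prodVec_alphaGen (R : ℝ → ℝ → TwoLeg N ℂ) (a : Fin N → ℝ → A)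
    (b : Fin N → Fin N → ℝ → A)
    (hab : ∀ (k₁ k₂ : ℝ) (i m n : Fin N),
      a i k₁ * b m n k₂ =
        ∑ i₁ : Fin N, ∑ m₁ : Fin N, ∑ m₂ : Fin N, ∑ i₂ : Fin N,
          (R k₂ k₁ (m, i) (m₁, i₁) * R k₁ (-k₂) (i₁, m₂) (i₂, n)) •
            (b m₁ m₂ k₂ * a i₂ k₁))
    (k₁ k₂ : ℝ) :
    prodVec (alphaGen a b · k₁) (alphaGen a b · k₂) =
      (leg1 (bmat b k₁) * cmap A (flipM (R k₂ (-k₁))) * leg2 (bmat b k₂) *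
        cmap A (R (-k₁) (-k₂))) *ᵥ prodVec (a · (-k₁)) (a · (-k₂)) := by
  rw [alphaGen_eq_mulVec a b k₁, prodVec_mulVec_left, alphaGen_eq_mulVec a b k₂,
    prodVec_mulVec_right_of_exchange _ _ _ _ (bmat b k₂) (hab (-k₁) k₂), mulVec_mulVec,
    ← mul_assoc, ← mul_assoc]

end ReflectionAlgebra

/-- `α := ρ_B(a) = b a'` satisfies the same ZF exchange relation as
`a`: `α₁(k₁) α₂(k₂) = R₂₁(k₂,k₁) α₂(k₂) α₁(k₁)`. -/
theorem alpha_exchange {N : ℕ} {A : Type*} [Ring A] [Algebra ℂ A]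
    (R : ℝ → ℝ → TwoLeg N ℂ)
    (a : Fin N → ℝ → A) (b : Fin N → Fin N → ℝ → A)
    (hunit : ∀ k₁ k₂ : ℝ, R k₁ k₂ * flipM (R k₂ k₁) = 1)
    (haa : ∀ (k₁ k₂ : ℝ) (i j : Fin N),
      a i k₁ * a j k₂ =
        ∑ i' : Fin N, ∑ j' : Fin N,
          R k₂ k₁ (j, i) (j', i') • (a j' k₂ * a i' k₁))
    (hab : ∀ (k₁ k₂ : ℝ) (i m n : Fin N),
      a i k₁ * b m n k₂ =
        ∑ i₁ : Fin N, ∑ m₁ : Fin N, ∑ m₂ : Fin N, ∑ i₂ : Fin N,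
          (R k₂ k₁ (m, i) (m₁, i₁) * R k₁ (-k₂) (i₁, m₂) (i₂, n)) •
            (b m₁ m₂ k₂ * a i₂ k₁))
    (hrefl : ∀ k₁ k₂ : ℝ,
      cmap A (R k₁ k₂) * leg1 (bmat b k₁) * cmap A (flipM (R k₂ (-k₁))) *
          leg2 (bmat b k₂) =
        leg2 (bmat b k₂) * cmap A (R k₁ (-k₂)) * leg1 (bmat b k₁) *
          cmap A (flipM (R (-k₂) (-k₁)))) :
    ∀ (k₁ k₂ : ℝ) (i j : Fin N),
      alphaGen a b i k₁ * alphaGen a b j k₂ =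
        ∑ i' : Fin N, ∑ j' : Fin N,
          R k₂ k₁ (j, i) (j', i') • (alphaGen a b j' k₂ * alphaGen a b i' k₁) := by
  intro k₁ k₂
  have hunit' : cmap A (flipM (R k₂ k₁)) * cmap A (R k₁ k₂) = 1 :=
    cmap_mul_cmap_eq_one (mul_eq_one_comm.mp (hunit k₁ k₂))
  have haa' : prodVec (a · (-k₁)) (a · (-k₂)) =
      cmap A (flipM (R (-k₂) (-k₁))) *ᵥ flipV (prodVec (a · (-k₂)) (a · (-k₁))) :=
    (exchange_iff_prodVec _ _ _).1 (haa (-k₁) (-k₂))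
  have hα₁₂ : prodVec (alphaGen a b · k₁) (alphaGen a b · k₂) =
      (leg1 (bmat b k₁) * cmap A (flipM (R k₂ (-k₁))) * leg2 (bmat b k₂)) *ᵥ
        flipV (prodVec (a · (-k₂)) (a · (-k₁))) := by
    rw [prodVec_alphaGen R a b hab, haa', mulVec_mulVec, mul_assoc _ (cmap A (R (-k₁) (-k₂))),
      cmap_mul_cmap_eq_one (hunit _ _), mul_one]
  have hα₂₁ : flipV (prodVec (alphaGen a b · k₂) (alphaGen a b · k₁)) =
      (leg2 (bmat b k₂) * cmap A (R k₁ (-k₂)) * leg1 (bmat b k₁) *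
        cmap A (flipM (R (-k₂) (-k₁)))) *ᵥ
        flipV (prodVec (a · (-k₂)) (a · (-k₁))) := by
    rw [prodVec_alphaGen R a b hab k₂ k₁, flipV_mulVec]
    simp only [flipM_mul, flipM_leg1, flipM_leg2, flipM_cmap, flipM_flipM]
  refine (exchange_iff_prodVec (R k₂ k₁) _ _).2 ?_
  rw [hα₁₂, hα₂₁, ← hrefl, mulVec_mulVec, ← mul_assoc, ← mul_assoc, ← mul_assoc, hunit', one_mul]
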